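/- Let N ≥ 3 be an integer, μ ∈ (0,1/4), α := 1/2 + √(1/4 − μ), q ∈ (1,2), γ ∈ (1−α, α), let b ≥ max{(4−q)/(q−1)+γ, (N−2)/2, 1}, and R ∈ (0,1]. There exists c₀ > 0 depending only on N, μ, q, b, γ and R such that for every c ≥ c₀ and every z ∈ ℝ^N with z_N = 0, the function w(x) := c·(R² − |x−z|²)^{−b}·x_N^{γ} satisfies Δw(x) + (μ/x_N²)·w(x) ≤ ‖∇w(x)‖^q for every x ∈ ℝ^N with x_N > 0 and |x−z| < R. -/

import Mathlib

open MeasureTheory Metric Set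

/-- The Laplacian of `u : ℝ^N → ℝ`, as the sum of the second partial derivatives
in the coordinate directions. -/
noncomputable def lap {N : ℕ} (u : EuclideanSpace ℝ (Fin N) → ℝ)
    (x : EuclideanSpace ℝ (Fin N)) : ℝ :=
  ∑ i : Fin N, fderiv ℝ (fun y => fderiv ℝ u y (EuclideanSpace.single i 1)) x
    (EuclideanSpace.single i 1)

/-- The last coordinate index of `Fin N`. -/
def lastIdx (N : ℕ) (h : 0 < N) : Fin N := ⟨N - 1, by omega⟩

/-!
Write `g = R² - |x - z|²` and `u = x_N`. Differentiating `w = c g^{-b} u^γ` twice and using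
`z_N = 0`,
`Δw + μ w / u² = c (2bN g^{-b-1} u^γ + 4b(b+1) g^{-b-2} u^γ |x - z|² + 4bγ g^{-b-1} u^γ)
  + c (γ(γ - 1) + μ) g^{-b} u^{γ-2}`.
The last term is negative because `γ` lies between the roots `1 - α < α` of `t² - t + μ`, and
since `g, |x - z|² ≤ 1` the rest is at most `c K g^{-b-2} u^γ` with `K = 4b(b+1) + 2b(N + 2γ)`.
On the other side `|∇w| ≥ ∂_N w = c (A + B)` with `A = 2b g^{-b-1} u^{γ+1}`, `B = γ g^{-b} u^{γ-1}`,
and `(A + B)^q ≥ A^{t₁} B^{t₂}` for `t₁ + t₂ = q`. Taking `t₁ - t₂ = γ(1 - q)` makes the powers of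
`u` combine to `u^γ`, and the lower bound on `b` makes the resulting power of `g` at most `-b - 2`,
so `|∇w|^q ≥ c^q m g^{-b-2} u^γ` with `m = (2b)^{t₁} γ^{t₂}`. Since `q > 1`, this beats
`c K g^{-b-2} u^γ` as soon as `c^{q-1} ≥ K / m`.
-/

theorem rpow_mul_rpow_le_add_rpow {A B s t : ℝ} (hA : 0 ≤ A) (hB : 0 ≤ B) (hs : 0 ≤ s)
    (ht : 0 ≤ t) : A ^ s * B ^ t ≤ (A + B) ^ (s + t) := by
  rw [Real.rpow_add_of_nonneg (by linarith) hs ht]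
  exact mul_le_mul (Real.rpow_le_rpow hA (by linarith) hs) (Real.rpow_le_rpow hB (by linarith) ht)
    (by positivity) (by positivity)

theorem half_add_sqrt_lt_one {μ : ℝ} (hμ : 0 < μ) : 1 / 2 + √(1 / 4 - μ) < 1 := by
  have : √(1 / 4 - μ) < 1 / 2 := (Real.sqrt_lt' (by norm_num)).2 (by linarith)
  linarith

theorem mul_sub_one_add_neg {μ α γ : ℝ} (hμ : μ ≤ 1 / 4) (hα : α = 1 / 2 + √(1 / 4 - μ))
    (hγ : γ ∈ Ioo (1 - α) α) : γ * (γ - 1) + μ < 0 := by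
  have hsq : √(1 / 4 - μ) ^ 2 = 1 / 4 - μ := Real.sq_sqrt (by linarith)
  have : γ * (γ - 1) + μ = (γ - (1 - α)) * (γ - α) := by rw [hα]; linear_combination hsq
  rw [this]
  exact mul_neg_of_pos_of_neg (by linarith [hγ.1]) (by linarith [hγ.2])

theorem mul_rpow_le_slope_rpow {b γ q g u : ℝ} (hq : q ∈ Ioo 1 2)
    (hγ : γ ∈ Ioo 0 1) (hb : (4 - q) / (q - 1) + γ ≤ b) (hg0 : 0 < g) (hg1 : g ≤ 1)
    (hu : 0 < u) :
    (2 * b) ^ ((q - γ * (q - 1)) / 2) * γ ^ ((q + γ * (q - 1)) / 2) * (g ^ (-b - 2) * u ^ γ)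
      ≤ (2 * b * (g ^ (-b - 1) * u ^ (γ + 1)) + γ * (g ^ (-b) * u ^ (γ - 1))) ^ q := by
  obtain ⟨hq1, hq2⟩ := hq
  obtain ⟨hγ0, hγ1⟩ := hγ
  have hb' : 4 - q + γ * (q - 1) ≤ b * (q - 1) := by
    have := mul_le_mul_of_nonneg_right hb (sub_pos.2 hq1).le
    rwa [add_mul, div_mul_cancel₀ _ (sub_pos.2 hq1).ne'] at this
  have hb0 : 0 < b := by nlinarith
  have hγq : 0 < γ * (q - 1) := mul_pos hγ0 (sub_pos.2 hq1)
  have ht₁ : 0 ≤ (q - γ * (q - 1)) / 2 := by nlinarith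
  have ht₂ : 0 ≤ (q + γ * (q - 1)) / 2 := by nlinarith
  have hexp : (-b - 1) * ((q - γ * (q - 1)) / 2) + -b * ((q + γ * (q - 1)) / 2) ≤ -b - 2 := by
    nlinarith
  have hγsum : (γ + 1) * ((q - γ * (q - 1)) / 2) + (γ - 1) * ((q + γ * (q - 1)) / 2) = γ := by
    ring
  set t₁ := (q - γ * (q - 1)) / 2
  set t₂ := (q + γ * (q - 1)) / 2
  have hpow : (2 * b * (g ^ (-b - 1) * u ^ (γ + 1))) ^ t₁ * (γ * (g ^ (-b) * u ^ (γ - 1))) ^ t₂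
      = (2 * b) ^ t₁ * γ ^ t₂
          * (g ^ ((-b - 1) * t₁ + -b * t₂) * u ^ ((γ + 1) * t₁ + (γ - 1) * t₂)) := by
    rw [Real.mul_rpow (x := 2 * b) (by positivity) (by positivity),
      Real.mul_rpow (x := γ) (by positivity) (by positivity),
      Real.mul_rpow (x := g ^ (-b - 1)) (by positivity) (by positivity),
      Real.mul_rpow (x := g ^ (-b)) (by positivity) (by positivity), ← Real.rpow_mul hg0.le,
      ← Real.rpow_mul hg0.le, ← Real.rpow_mul hu.le, ← Real.rpow_mul hu.le, Real.rpow_add hg0,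
      Real.rpow_add hu]
    ring
  calc (2 * b) ^ t₁ * γ ^ t₂ * (g ^ (-b - 2) * u ^ γ)
      ≤ (2 * b) ^ t₁ * γ ^ t₂ * (g ^ ((-b - 1) * t₁ + -b * t₂) * u ^ γ) := by
        have := Real.rpow_le_rpow_of_exponent_ge hg0 hg1 hexp
        gcongr
    _ = (2 * b * (g ^ (-b - 1) * u ^ (γ + 1))) ^ t₁ * (γ * (g ^ (-b) * u ^ (γ - 1))) ^ t₂ := by
        rw [hpow, hγsum]
    _ ≤ _ := by
        rw [show q = t₁ + t₂ by ring]
        exact rpow_mul_rpow_le_add_rpow (by positivity) (by positivity) ht₁ ht₂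

theorem mul_le_rpow_mul_of_rpow_inv_le {K m q c : ℝ} (hK : 0 ≤ K) (hm : 0 < m) (hq : 1 < q)
    (hc : (K / m) ^ (q - 1)⁻¹ ≤ c) : c * K ≤ c ^ q * m := by
  have hc0 : 0 ≤ c := (Real.rpow_nonneg (div_nonneg hK hm.le) _).trans hc
  have hKm : K ≤ c ^ (q - 1) * m :=
    (div_le_iff₀ hm).1 ((Real.rpow_inv_le_iff_of_pos (div_nonneg hK hm.le) hc0 (by linarith)).1 hc)
  calc c * K ≤ c * (c ^ (q - 1) * m) := by gcongr
    _ = c ^ (1 + (q - 1)) * m := by rw [Real.rpow_one_add' hc0 (by linarith), mul_assoc]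
    _ = c ^ q * m := by rw [add_sub_cancel]

section Barrier

variable {N : ℕ} (z : EuclideanSpace ℝ (Fin N)) (R : ℝ) (i : Fin N)

theorem hasFDerivAt_rpow_mul_rpow {y : EuclideanSpace ℝ (Fin N)}
    (hg : R ^ 2 - ‖y - z‖ ^ 2 ≠ 0) (hu : y i ≠ 0) (p r : ℝ) :
    HasFDerivAt (fun w => (R ^ 2 - ‖w - z‖ ^ 2) ^ p * (w i) ^ r)
      ((r * (R ^ 2 - ‖y - z‖ ^ 2) ^ p * (y i) ^ (r - 1)) • EuclideanSpace.proj i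
        - (2 * p * (R ^ 2 - ‖y - z‖ ^ 2) ^ (p - 1) * (y i) ^ r) • innerSL ℝ (y - z)) y := by
  have hg' := ((Real.hasDerivAt_rpow_const (p := p) (Or.inl hg)).comp_hasFDerivAt y
    ((((hasFDerivAt_id y).sub_const z).norm_sq).const_sub (R ^ 2)))
  have hu' := (Real.hasDerivAt_rpow_const (p := r) (Or.inl hu)).comp_hasFDerivAt y
    (EuclideanSpace.proj (𝕜 := ℝ) i).hasFDerivAt
  refine (hg'.mul hu').congr_fderiv ?_
  ext v
  simp only [Function.comp_apply, EuclideanSpace.coe_proj, PiLp.proj_apply, id_eq, add_apply,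
    sub_apply, smul_apply, neg_apply, smul_eq_mul, ContinuousLinearMap.comp_id, map_sub,
    coe_innerSL_apply, nsmul_eq_mul, Nat.cast_ofNat]
  ring

noncomputable def barrier (c b γ : ℝ) (y : EuclideanSpace ℝ (Fin N)) : ℝ :=
  c * (R ^ 2 - ‖y - z‖ ^ 2) ^ (-b) * (y i) ^ γ

theorem fderiv_barrier_single (c b γ : ℝ) (j : Fin N) {y : EuclideanSpace ℝ (Fin N)}
    (hg : 0 < R ^ 2 - ‖y - z‖ ^ 2) (hu : 0 < y i) :
    fderiv ℝ (barrier z R i c b γ) y (EuclideanSpace.single j 1)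
      = c * ((if i = j then γ else 0) * ((R ^ 2 - ‖y - z‖ ^ 2) ^ (-b) * (y i) ^ (γ - 1))
          + 2 * b * ((R ^ 2 - ‖y - z‖ ^ 2) ^ (-b - 1) * (y i) ^ γ * (y j - z j))) := by
  have h := (hasFDerivAt_rpow_mul_rpow z R i hg.ne' hu.ne' (-b) γ).const_mul c
  simp only [← mul_assoc] at h
  unfold barrier
  rw [h.fderiv]
  simp only [sub_apply, smul_apply, PiLp.proj_apply, PiLp.single_apply, smul_eq_mul,
    coe_innerSL_apply, EuclideanSpace.inner_single_right, Real.ringHom_apply, PiLp.sub_apply]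
  split_ifs <;> ring

theorem fderiv_fderiv_barrier_single (c b γ : ℝ) (j : Fin N) {x : EuclideanSpace ℝ (Fin N)}
    (hg : 0 < R ^ 2 - ‖x - z‖ ^ 2) (hu : 0 < x i) :
    fderiv ℝ (fun y => fderiv ℝ (barrier z R i c b γ) y (EuclideanSpace.single j 1)) x
        (EuclideanSpace.single j 1)
      = c * (2 * b * (R ^ 2 - ‖x - z‖ ^ 2) ^ (-b - 1) * (x i) ^ γ
          + 4 * b * (b + 1) * (R ^ 2 - ‖x - z‖ ^ 2) ^ (-b - 2) * (x i) ^ γ * (x j - z j) ^ 2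
          + if i = j then γ * (γ - 1) * (R ^ 2 - ‖x - z‖ ^ 2) ^ (-b) * (x i) ^ (γ - 2)
              + 4 * b * γ * (R ^ 2 - ‖x - z‖ ^ 2) ^ (-b - 1) * (x i) ^ (γ - 1) * (x i - z i)
            else 0) := by
  have hnear : ∀ᶠ y in nhds x, 0 < R ^ 2 - ‖y - z‖ ^ 2 ∧ 0 < y i :=
    ((by fun_prop : Continuous fun y : EuclideanSpace ℝ (Fin N) => R ^ 2 - ‖y - z‖ ^ 2)
      |>.continuousAt.eventually (eventually_gt_nhds hg)).and
      ((EuclideanSpace.proj (𝕜 := ℝ) i).continuous.continuousAt.eventually (eventually_gt_nhds hu))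
  have hpartial := Filter.EventuallyEq.fderiv_eq (𝕜 := ℝ) (Filter.eventually_iff_exists_mem.2
    ⟨_, hnear, fun y hy => fderiv_barrier_single z R i c b γ j hy.1 hy.2⟩)
  have hcoord : HasFDerivAt (fun y : EuclideanSpace ℝ (Fin N) => y j - z j)
      (EuclideanSpace.proj (𝕜 := ℝ) j) x :=
    (EuclideanSpace.proj (𝕜 := ℝ) j).hasFDerivAt.sub_const (z j)
  have h := ((((hasFDerivAt_rpow_mul_rpow z R i hg.ne' hu.ne' (-b) (γ - 1)).const_mul
      (if i = j then γ else 0)).add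
    (((hasFDerivAt_rpow_mul_rpow z R i hg.ne' hu.ne' (-b - 1) γ).mul hcoord).const_mul
      (2 * b))).const_mul c)
  simp only [Pi.add_apply, Pi.mul_apply] at h
  rw [hpartial, h.fderiv, show -b - 1 - 1 = -b - 2 by ring, show γ - 1 - 1 = γ - 2 by ring]
  split_ifs with hij
  · subst hij
    simp only [add_apply, sub_apply, smul_apply, PiLp.proj_apply, smul_eq_mul, coe_innerSL_apply,
      EuclideanSpace.inner_single_right, Real.ringHom_apply, PiLp.single_eq_same, PiLp.sub_apply]
    ring
  · simp only [add_apply, sub_apply, smul_apply, PiLp.proj_apply, smul_eq_mul, coe_innerSL_apply,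
      EuclideanSpace.inner_single_right, Real.ringHom_apply, PiLp.single_eq_same,
      PiLp.single_eq_of_ne (p := 2) hij, PiLp.sub_apply]
    ring

theorem lap_barrier (c b γ : ℝ) (hz : z i = 0) {x : EuclideanSpace ℝ (Fin N)}
    (hg : 0 < R ^ 2 - ‖x - z‖ ^ 2) (hu : 0 < x i) :
    lap (barrier z R i c b γ) x
      = c * (2 * b * N * (R ^ 2 - ‖x - z‖ ^ 2) ^ (-b - 1) * (x i) ^ γ
          + 4 * b * (b + 1) * (R ^ 2 - ‖x - z‖ ^ 2) ^ (-b - 2) * (x i) ^ γ * ‖x - z‖ ^ 2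
          + γ * (γ - 1) * (R ^ 2 - ‖x - z‖ ^ 2) ^ (-b) * (x i) ^ (γ - 2)
          + 4 * b * γ * (R ^ 2 - ‖x - z‖ ^ 2) ^ (-b - 1) * (x i) ^ γ) := by
  have hnorm : ‖x - z‖ ^ 2 = ∑ j, (x j - z j) ^ 2 := by
    simp [EuclideanSpace.norm_sq_eq]
  have hpow : (x i) ^ (γ - 1) * x i = (x i) ^ γ := by
    rw [Real.rpow_sub_one hu.ne', div_mul_cancel₀ _ hu.ne']
  unfold lap
  rw [Finset.sum_congr rfl fun j _ => fderiv_fderiv_barrier_single z R i c b γ j hg hu]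
  simp only [Finset.sum_add_distrib, ← Finset.mul_sum, Finset.sum_ite_eq, Finset.mem_univ,
    if_true, Finset.sum_const, Finset.card_univ, Fintype.card_fin, nsmul_eq_mul, ← hnorm, hz,
    sub_zero, ← hpow]
  ring

theorem lap_barrier_add_le {c b γ μ : ℝ} (hc : 0 ≤ c) (hb : 0 ≤ b) (hγ : 0 ≤ γ)
    (hγμ : γ * (γ - 1) + μ ≤ 0) (hR : R ^ 2 ≤ 1) (hz : z i = 0) {x : EuclideanSpace ℝ (Fin N)}
    (hg : 0 < R ^ 2 - ‖x - z‖ ^ 2) (hu : 0 < x i) :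
    lap (barrier z R i c b γ) x + μ / (x i) ^ 2 * barrier z R i c b γ x
      ≤ c * (4 * b * (b + 1) + 2 * b * (N + 2 * γ))
          * ((R ^ 2 - ‖x - z‖ ^ 2) ^ (-b - 2) * (x i) ^ γ) := by
  rw [lap_barrier z R i c b γ hz hg hu, barrier]
  set g := R ^ 2 - ‖x - z‖ ^ 2
  set u := x i
  have hs : ‖x - z‖ ^ 2 ≤ 1 := by linarith
  have hgpow : g ^ (-b - 1) ≤ g ^ (-b - 2) :=
    Real.rpow_le_rpow_of_exponent_ge hg (by linarith [sq_nonneg ‖x - z‖]) (by linarith)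
  have hμ : μ / u ^ 2 * (c * g ^ (-b) * u ^ γ) = c * μ * (g ^ (-b) * u ^ (γ - 2)) := by
    rw [Real.rpow_sub hu, Real.rpow_two]
    field_simp
  have hsing : c * (γ * (γ - 1) + μ) * (g ^ (-b) * u ^ (γ - 2)) ≤ 0 :=
    mul_nonpos_of_nonpos_of_nonneg (mul_nonpos_of_nonneg_of_nonpos hc hγμ) (by positivity)
  calc _ = c * (2 * b * N * g ^ (-b - 1) * u ^ γ
            + 4 * b * (b + 1) * g ^ (-b - 2) * u ^ γ * ‖x - z‖ ^ 2
            + 4 * b * γ * g ^ (-b - 1) * u ^ γ)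
          + c * (γ * (γ - 1) + μ) * (g ^ (-b) * u ^ (γ - 2)) := by
        rw [hμ]
        ring
    _ ≤ c * (2 * b * N * g ^ (-b - 2) * u ^ γ + 4 * b * (b + 1) * g ^ (-b - 2) * u ^ γ * 1
            + 4 * b * γ * g ^ (-b - 2) * u ^ γ) + 0 := by
        gcongr
    _ = _ := by ring

theorem abs_fderiv_single_le_norm_gradient (f : EuclideanSpace ℝ (Fin N) → ℝ)
    (x : EuclideanSpace ℝ (Fin N)) (j : Fin N) :
    |fderiv ℝ f x (EuclideanSpace.single j 1)| ≤ ‖gradient f x‖ := by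
  rw [← inner_gradient_left]
  simpa using abs_real_inner_le_norm (gradient f x) (EuclideanSpace.single j 1)

theorem barrier_slope_le_norm_gradient (c b γ : ℝ) (hz : z i = 0)
    {x : EuclideanSpace ℝ (Fin N)} (hg : 0 < R ^ 2 - ‖x - z‖ ^ 2) (hu : 0 < x i) :
    c * (2 * b * ((R ^ 2 - ‖x - z‖ ^ 2) ^ (-b - 1) * (x i) ^ (γ + 1))
        + γ * ((R ^ 2 - ‖x - z‖ ^ 2) ^ (-b) * (x i) ^ (γ - 1)))
      ≤ ‖gradient (barrier z R i c b γ) x‖ := by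
  have h := fderiv_barrier_single z R i c b γ i hg hu
  rw [if_pos rfl, hz, sub_zero, mul_assoc _ (x i ^ γ), ← Real.rpow_add_one hu.ne'] at h
  rw [add_comm (2 * b * _)]
  exact h ▸ (le_abs_self _).trans (abs_fderiv_single_le_norm_gradient _ x i)

noncomputable def barrierThreshold (N : ℕ) (q γ b : ℝ) : ℝ :=
  ((4 * b * (b + 1) + 2 * b * (N + 2 * γ))
    / ((2 * b) ^ ((q - γ * (q - 1)) / 2) * γ ^ ((q + γ * (q - 1)) / 2))) ^ (q - 1)⁻¹

theorem barrierThreshold_pos {q γ b : ℝ} (hγ : 0 < γ) (hb : 0 < b) :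
    0 < barrierThreshold N q γ b := by
  unfold barrierThreshold
  positivity

theorem lap_barrier_add_le_norm_gradient_rpow {c b γ μ q : ℝ} (hq : q ∈ Ioo 1 2)
    (hγ : γ ∈ Ioo 0 1) (hγμ : γ * (γ - 1) + μ ≤ 0) (hb : (4 - q) / (q - 1) + γ ≤ b)
    (hR : R ^ 2 ≤ 1) (hc : barrierThreshold N q γ b ≤ c) (hz : z i = 0)
    {x : EuclideanSpace ℝ (Fin N)} (hg : 0 < R ^ 2 - ‖x - z‖ ^ 2) (hu : 0 < x i) :
    lap (barrier z R i c b γ) x + μ / (x i) ^ 2 * barrier z R i c b γ x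
      ≤ ‖gradient (barrier z R i c b γ) x‖ ^ q := by
  have hb0 : 0 < b := by
    have : 0 < (4 - q) / (q - 1) := div_pos (by linarith [hq.2]) (by linarith [hq.1])
    linarith [hγ.1]
  have hK : 0 ≤ 4 * b * (b + 1) + 2 * b * (N + 2 * γ) := by
    have := hγ.1.le
    positivity
  have hm : 0 < (2 * b) ^ ((q - γ * (q - 1)) / 2) * γ ^ ((q + γ * (q - 1)) / 2) := by
    have := hγ.1
    positivity
  have hc0 : 0 ≤ c := (barrierThreshold_pos hγ.1 hb0).le.trans hc
  have hg1 : R ^ 2 - ‖x - z‖ ^ 2 ≤ 1 := by nlinarith [sq_nonneg ‖x - z‖]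
  have hslope := barrier_slope_le_norm_gradient z R i c b γ hz hg hu
  set g := R ^ 2 - ‖x - z‖ ^ 2
  have hslope0 : 0 ≤ 2 * b * (g ^ (-b - 1) * x i ^ (γ + 1)) + γ * (g ^ (-b) * x i ^ (γ - 1)) := by
    have := hγ.1
    positivity
  calc _ ≤ c * (4 * b * (b + 1) + 2 * b * (N + 2 * γ)) * (g ^ (-b - 2) * x i ^ γ) :=
        lap_barrier_add_le z R i hc0 hb0.le hγ.1.le hγμ hR hz hg hu
    _ ≤ c ^ q * ((2 * b) ^ ((q - γ * (q - 1)) / 2) * γ ^ ((q + γ * (q - 1)) / 2))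
          * (g ^ (-b - 2) * x i ^ γ) :=
        mul_le_mul_of_nonneg_right (mul_le_rpow_mul_of_rpow_inv_le hK hm hq.1 hc) (by positivity)
    _ ≤ c ^ q * (2 * b * (g ^ (-b - 1) * x i ^ (γ + 1)) + γ * (g ^ (-b) * x i ^ (γ - 1))) ^ q := by
        rw [mul_assoc]
        gcongr
        exact mul_rpow_le_slope_rpow hq hγ hb hg hg1 hu
    _ = (c * (2 * b * (g ^ (-b - 1) * x i ^ (γ + 1)) + γ * (g ^ (-b) * x i ^ (γ - 1)))) ^ q :=
        (Real.mul_rpow hc0 hslope0).symm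
    _ ≤ _ := Real.rpow_le_rpow (by positivity) hslope (by linarith [hq.1])

end Barrier

/-- The half-space case of the barrier of Proposition A.1 when `μ < 1/4`:
`w(x) = c (R² - |x-z|²)^{-b} x_N^γ` is a supersolution. -/
theorem stmt_14 (N : ℕ) (hN : 3 ≤ N) (μ α q γ b R : ℝ)
    (hμ : μ ∈ Set.Ioo (0:ℝ) (1/4)) (hα : α = 1/2 + Real.sqrt (1/4 - μ))
    (hq : q ∈ Set.Ioo (1:ℝ) 2) (hγ : γ ∈ Set.Ioo (1 - α) α)
    (hb : max (max ((4 - q) / (q - 1) + γ) (((N : ℝ) - 2) / 2)) 1 ≤ b)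
    (hR : R ∈ Set.Ioc (0:ℝ) 1) :
    ∃ c₀ : ℝ, 0 < c₀ ∧
      ∀ c ≥ c₀, ∀ z : EuclideanSpace ℝ (Fin N), z (lastIdx N (by omega)) = 0 →
        ∀ x : EuclideanSpace ℝ (Fin N), 0 < x (lastIdx N (by omega)) → ‖x - z‖ < R →
          lap (fun y => c * (R ^ 2 - ‖y - z‖ ^ 2) ^ (-b)
                * (y (lastIdx N (by omega))) ^ γ) x
            + (μ / (x (lastIdx N (by omega))) ^ 2) *
                (c * (R ^ 2 - ‖x - z‖ ^ 2) ^ (-b) * (x (lastIdx N (by omega))) ^ γ)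
            ≤ ‖gradient (fun y => c * (R ^ 2 - ‖y - z‖ ^ 2) ^ (-b)
                * (y (lastIdx N (by omega))) ^ γ) x‖ ^ q := by
  have hα1 : α < 1 := hα ▸ half_add_sqrt_lt_one hμ.1
  have hγ' : γ ∈ Ioo 0 1 := ⟨by linarith [hγ.1], by linarith [hγ.2]⟩
  have hbq : (4 - q) / (q - 1) + γ ≤ b := (le_max_left _ _).trans ((le_max_left _ _).trans hb)
  have hb1 : 1 ≤ b := (le_max_right _ _).trans hb
  refine ⟨barrierThreshold N q γ b, barrierThreshold_pos hγ'.1 (by linarith),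
    fun c hc z hz x hx hxz => ?_⟩
  have hg : 0 < R ^ 2 - ‖x - z‖ ^ 2 := by nlinarith [norm_nonneg (x - z)]
  exact lap_barrier_add_le_norm_gradient_rpow z R _ hq hγ' (mul_sub_one_add_neg hμ.2.le hα hγ).le
    hbq (pow_le_one₀ hR.1.le hR.2) hc hz hg hx
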